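/- Let |γ_θ⟩ = A(θ)|0⟩ + B(θ)∑_j θ_j|j⟩ where A(θ) = 1 + (e^{−iT}−1)(1−‖θ‖²) and B(θ) = (e^{−iT}−1)√(1−‖θ‖²) (unnormalized), with the normalized states parametrized by G(θ) = (B(θ)/A(θ))·θ. If ‖G(θ)‖ ≤ 1/2 and ‖G(η)‖ ≤ 1/2, then 1 − |⟨γ̂_θ|γ̂_η⟩|² ≥ (1/4)·‖G(θ) − G(η)‖², where |γ̂_ζ⟩ = (|0⟩ + ∑_j G_j(ζ)|j⟩)/√(1+‖G(ζ)‖²). -/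

import Mathlib

/-!
Writing `x = (1, u)` and `y = (1, v)`, Lagrange's identity gives
`‖x‖²‖y‖² - |⟪x, y⟫|² = ‖u - v‖² + (‖u‖²‖v‖² - |⟪u, v⟫|²)`, and the last bracket is nonnegative
by Cauchy–Schwarz. Dividing by `‖x‖²‖y‖² = (1 + ‖u‖²)(1 + ‖v‖²) ≤ 4` gives the bound.
-/

open scoped InnerProductSpace

section

variable {𝕜 E : Type*} [RCLike 𝕜] [NormedAddCommGroup E] [InnerProductSpace 𝕜 E]

theorem one_add_norm_sq_mul_one_add_norm_sq_eq (u v : E) :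
    (1 + ‖u‖ ^ 2) * (1 + ‖v‖ ^ 2)
      = ‖1 + ⟪u, v⟫_𝕜‖ ^ 2 + ‖u - v‖ ^ 2 + (‖u‖ ^ 2 * ‖v‖ ^ 2 - ‖⟪u, v⟫_𝕜‖ ^ 2) := by
  have h_one_add : ‖1 + ⟪u, v⟫_𝕜‖ ^ 2 = 1 + 2 * RCLike.re ⟪u, v⟫_𝕜 + ‖⟪u, v⟫_𝕜‖ ^ 2 := by
    simp only [← RCLike.normSq_eq_def', RCLike.normSq_add, map_one, one_mul, RCLike.conj_re]
    ring
  rw [h_one_add, norm_sub_sq (𝕜 := 𝕜)]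
  ring

theorem norm_sub_sq_div_le_one_sub_norm_one_add_inner_sq_div (u v : E) :
    ‖u - v‖ ^ 2 / ((1 + ‖u‖ ^ 2) * (1 + ‖v‖ ^ 2))
      ≤ 1 - ‖1 + ⟪u, v⟫_𝕜‖ ^ 2 / ((1 + ‖u‖ ^ 2) * (1 + ‖v‖ ^ 2)) := by
  have hD : 0 < (1 + ‖u‖ ^ 2) * (1 + ‖v‖ ^ 2) := by positivity
  have hCS : ‖⟪u, v⟫_𝕜‖ ^ 2 ≤ ‖u‖ ^ 2 * ‖v‖ ^ 2 := by
    rw [← mul_pow]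
    exact pow_le_pow_left₀ (norm_nonneg _) (norm_inner_le_norm u v) 2
  rw [le_sub_iff_add_le, ← add_div, div_le_one hD,
    one_add_norm_sq_mul_one_add_norm_sq_eq (𝕜 := 𝕜)]
  linarith

end

/-- for the normalized affine vectors
`γ̂_u = (|0⟩ + ∑_j u_j|j⟩)/√(1+‖u‖²)` with `u = G(θ)`, `v = G(η)` satisfying
`‖u‖ ≤ 1/2`, `‖v‖ ≤ 1/2`, the overlap `|⟨γ̂_u|γ̂_v⟩|² = |1+⟨u,v⟩|²/((1+‖u‖²)(1+‖v‖²))`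
satisfies `1 − |⟨γ̂_u|γ̂_v⟩|² ≥ ‖u − v‖²/4`. -/
theorem stmt10 (m : ℕ) (u v : EuclideanSpace ℂ (Fin m))
    (hu : ‖u‖ ≤ 1 / 2) (hv : ‖v‖ ≤ 1 / 2) :
    ‖u - v‖ ^ 2 / 4
      ≤ 1 - ‖(1 + (inner ℂ u v : ℂ))‖ ^ 2 / ((1 + ‖u‖ ^ 2) * (1 + ‖v‖ ^ 2)) := by
  have hu2 : ‖u‖ ^ 2 ≤ 1 := by nlinarith [norm_nonneg u]
  have hv2 : ‖v‖ ^ 2 ≤ 1 := by nlinarith [norm_nonneg v]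
  have hD : (1 + ‖u‖ ^ 2) * (1 + ‖v‖ ^ 2) ≤ 4 := by nlinarith [sq_nonneg ‖u‖, sq_nonneg ‖v‖]
  calc ‖u - v‖ ^ 2 / 4 ≤ ‖u - v‖ ^ 2 / ((1 + ‖u‖ ^ 2) * (1 + ‖v‖ ^ 2)) :=
        div_le_div_of_nonneg_left (sq_nonneg _) (by positivity) hD
    _ ≤ _ := norm_sub_sq_div_le_one_sub_norm_one_add_inner_sq_div u v
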